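/- If Y ⊆ R^d is closed and there exist ε, C > 0 such that every convex set K of volume ε satisfies #(K ∩ Y) ≤ C, then R^d does not belong to the closure of G.Y in the Chabauty-Fell topology, where G = SL_d(R) ⋉ R^d. -/

import Mathlib

/-!
Affine maps of determinant one preserve convexity and volume, so every image `g • Y` still meets
each convex set of volume `ε`, in particular a ball of radius `r` about the origin, in at most `C`
points. If `g • Y` were Chabauty–Fell `δ`-close to `ℝ^d`, it would be `δ`-dense in the ball of
radius `1/δ`; for `δ` small, `C + 1` points spaced `2δ` apart on a ray inside the ball then have
`C + 1` distinct nearby points of `g • Y` in it.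
-/

open Metric Set Filter MeasureTheory

/-- The Chabauty–Fell distance on subsets of `ℝ^d`. -/
noncomputable def CF {d : ℕ} (F₁ F₂ : Set (EuclideanSpace ℝ (Fin d))) : ℝ :=
  sInf ({ε : ℝ | 0 < ε ∧ F₁ ∩ ball 0 (1/ε) ⊆ thickening ε F₂ ∧
      F₂ ∩ ball 0 (1/ε) ⊆ thickening ε F₁} ∪ {1})

/-- The affine action of `G = SL_d(ℝ) ⋉ ℝ^d` on `ℝ^d`: `(A, v).x = A x + v`. -/
def affAct {d : ℕ} (g : Matrix.SpecialLinearGroup (Fin d) ℝ × EuclideanSpace ℝ (Fin d))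
    (x : EuclideanSpace ℝ (Fin d)) : EuclideanSpace ℝ (Fin d) :=
  WithLp.toLp 2 (fun i => ((g.1 : Matrix (Fin d) (Fin d) ℝ).mulVec x) i + g.2 i)

section AffineAction

variable {d : ℕ} (g : Matrix.SpecialLinearGroup (Fin d) ℝ × EuclideanSpace ℝ (Fin d))

lemma Matrix.SpecialLinearGroup.det_toEuclideanLin (A : Matrix.SpecialLinearGroup (Fin d) ℝ) :
    LinearMap.det (Matrix.toEuclideanLin (A : Matrix (Fin d) (Fin d) ℝ)) = 1 := by
  rw [Matrix.toEuclideanLin_eq_toLin_orthonormal, LinearMap.det_toLin, A.det_coe]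

lemma affAct_apply (x : EuclideanSpace ℝ (Fin d)) :
    affAct g x = Matrix.toEuclideanLin (g.1 : Matrix (Fin d) (Fin d) ℝ) x + g.2 :=
  rfl

lemma affAct_injective : Function.Injective (affAct g) := by
  intro x y hxy
  simp only [affAct_apply, add_left_inj] at hxy
  have hdet : LinearMap.det (Matrix.toEuclideanLin (g.1 : Matrix (Fin d) (Fin d) ℝ)) ≠ 0 := by
    simp [g.1.det_toEuclideanLin]
  exact (LinearMap.equivOfDetNeZero _ hdet).injective hxy

lemma volume_preimage_affAct (K : Set (EuclideanSpace ℝ (Fin d))) :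
    volume (affAct g ⁻¹' K) = volume K := by
  have hdet := g.1.det_toEuclideanLin
  change volume (Matrix.toEuclideanLin (g.1 : Matrix (Fin d) (Fin d) ℝ) ⁻¹'
    ((· + g.2) ⁻¹' K)) = _
  rw [Measure.addHaar_preimage_linearMap volume (by simp [hdet]),
    measure_preimage_add_right, hdet]
  simp

lemma Convex.affAct_preimage {K : Set (EuclideanSpace ℝ (Fin d))} (hK : Convex ℝ K) :
    Convex ℝ (affAct g ⁻¹' K) := by
  have : affAct g ⁻¹' K = Matrix.toEuclideanLin (g.1 : Matrix (Fin d) (Fin d) ℝ) ⁻¹'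
      ((g.2 + ·) ⁻¹' K) := by
    ext x
    simp [affAct_apply, add_comm]
  rw [this]
  exact (hK.translate_preimage_right g.2).linear_preimage _

lemma encard_inter_affAct_image_le {Y : Set (EuclideanSpace ℝ (Fin d))} {m : ENNReal} {C : ℕ∞}
    (h : ∀ K : Set (EuclideanSpace ℝ (Fin d)), Convex ℝ K → volume K = m → (K ∩ Y).encard ≤ C)
    {K : Set (EuclideanSpace ℝ (Fin d))} (hK : Convex ℝ K) (hKm : volume K = m) :
    (K ∩ affAct g '' Y).encard ≤ C := by
  rw [← image_preimage_inter, (affAct_injective g).encard_image]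
  exact h _ (hK.affAct_preimage g) (by rw [volume_preimage_affAct, hKm])

end AffineAction

lemma inter_ball_subset_thickening_of_CF_lt {d : ℕ} {F₁ F₂ : Set (EuclideanSpace ℝ (Fin d))}
    {δ : ℝ} (h : CF F₁ F₂ < δ) (hδ : δ ≤ 1) :
    F₂ ∩ ball 0 (1 / δ) ⊆ thickening δ F₁ := by
  rw [CF] at h
  obtain ⟨a, ha, haδ⟩ :=
    exists_lt_of_csInf_lt (union_nonempty.2 (Or.inr (singleton_nonempty 1))) h
  rcases ha with ⟨ha, -, hcov⟩ | rfl
  · refine (inter_subset_inter_right _ (ball_subset_ball ?_)).trans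
      (hcov.trans (thickening_mono haδ.le _))
    gcongr
  · exact absurd hδ (not_le.2 haδ)

lemma exists_pos_addHaar_closedBall_eq {E : Type*} [NormedAddCommGroup E] [NormedSpace ℝ E]
    [MeasurableSpace E] [BorelSpace E] [FiniteDimensional ℝ E] [Nontrivial E]
    (μ : Measure E) [μ.IsAddHaarMeasure] {ε : ℝ} (hε : 0 < ε) :
    ∃ r > 0, μ (closedBall (0 : E) r) = ENNReal.ofReal ε := by
  set n := Module.finrank ℝ E
  have hn : (n : ℝ) ≠ 0 := by simp [n, Module.finrank_pos.ne']
  have hm : 0 < μ.real (ball (0 : E) 1) :=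
    ENNReal.toReal_pos (measure_ball_pos μ 0 one_pos).ne' measure_ball_lt_top.ne
  refine ⟨(ε / μ.real (ball (0 : E) 1)) ^ (n⁻¹ : ℝ), by positivity, ?_⟩
  rw [← ofReal_measureReal measure_closedBall_lt_top.ne,
    Measure.addHaar_real_closedBall μ 0 (by positivity), ← Real.rpow_natCast,
    ← Real.rpow_mul (by positivity), inv_mul_cancel₀ hn, Real.rpow_one, div_mul_cancel₀ _ hm.ne']

lemma add_one_le_encard_closedBall_inter_of_subset_thickening {E : Type*} [NormedAddCommGroup E]
    [NormedSpace ℝ E] [Nontrivial E] {F : Set E} {δ : ℝ} (n : ℕ) (hδ : 0 ≤ δ)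
    (hF : closedBall (0 : E) (2 * n * δ) ⊆ thickening δ F) :
    ((n + 1 : ℕ) : ℕ∞) ≤ (closedBall (0 : E) ((2 * n + 1) * δ) ∩ F).encard := by
  obtain ⟨u, hu⟩ := exists_norm_eq E zero_le_one
  set p : Fin (n + 1) → E := fun i => (2 * δ * i) • u
  have hp_norm (i : Fin (n + 1)) : ‖p i‖ ≤ 2 * n * δ := by
    have hi : (i : ℝ) ≤ n := by exact_mod_cast Nat.lt_succ_iff.1 i.2
    rw [norm_smul, hu, mul_one, Real.norm_of_nonneg (by positivity)]
    nlinarith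
  have hp_dist {i j : Fin (n + 1)} (hij : i ≠ j) : 2 * δ ≤ dist (p i) (p j) := by
    have hij' : (1 : ℝ) ≤ |(i : ℝ) - j| := by
      have : ((i : ℕ) : ℤ) - j ≠ 0 := sub_ne_zero.2 (by exact_mod_cast Fin.val_ne_of_ne hij)
      exact_mod_cast Int.one_le_abs this
    rw [dist_eq_norm, ← sub_smul, norm_smul, hu, mul_one, Real.norm_eq_abs, ← mul_sub, abs_mul,
      abs_of_nonneg (by positivity)]
    nlinarith
  choose q hqF hpq using
    fun i => mem_thickening_iff.1 (hF (mem_closedBall_zero_iff.2 (hp_norm i)))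
  have hq_inj : Function.Injective q := by
    intro i j hij
    by_contra hne
    have hpq_j := hpq j
    rw [← hij] at hpq_j
    linarith [dist_triangle_right (p i) (p j) (q i), hp_dist hne, hpq i]
  have hq_mem : range q ⊆ closedBall 0 ((2 * n + 1) * δ) ∩ F := by
    rintro _ ⟨i, rfl⟩
    refine ⟨?_, hqF i⟩
    rw [mem_closedBall_zero_iff]
    linarith [norm_le_norm_add_norm_sub (p i) (q i), hp_norm i, dist_eq_norm (p i) (q i) ▸ hpq i]
  calc ((n + 1 : ℕ) : ℕ∞) = ENat.card (Fin (n + 1)) := by simp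
    _ ≤ (range q).encard := hq_inj.encard_range
    _ ≤ _ := encard_mono hq_mem

theorem univ_not_in_orbit_closure_general {d : ℕ} (hd : 1 ≤ d)
    (Y : Set (EuclideanSpace ℝ (Fin d))) (ε : ℝ) (C : ℕ)
    (hε : 0 < ε)
    (h : ∀ K : Set (EuclideanSpace ℝ (Fin d)), Convex ℝ K →
      volume K = ENNReal.ofReal ε → (K ∩ Y).encard ≤ C) :
    ¬ ∃ g : ℕ → Matrix.SpecialLinearGroup (Fin d) ℝ × EuclideanSpace ℝ (Fin d),
      Tendsto (fun n => CF (affAct (g n) '' Y) (univ : Set (EuclideanSpace ℝ (Fin d))))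
        atTop (nhds 0) := by
  rintro ⟨g, hg⟩
  have : Nonempty (Fin d) := ⟨⟨0, hd⟩⟩
  obtain ⟨r, hr, hvol⟩ :=
    exists_pos_addHaar_closedBall_eq (volume : Measure (EuclideanSpace ℝ (Fin d))) hε
  set δ := min r 1 / (2 * C + 1)
  have hδ : 0 < δ := by positivity
  have hδ_mul : (2 * C + 1) * δ = min r 1 := mul_div_cancel₀ _ (by positivity)
  have hδ_le_one : δ ≤ 1 := by nlinarith [min_le_right r 1]
  have hδ_inv : 2 * C * δ < 1 / δ := by
    rw [lt_div_iff₀ hδ]; nlinarith [min_le_right r 1]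
  obtain ⟨n, hn⟩ := (hg.eventually (gt_mem_nhds hδ)).exists
  have hdense : closedBall 0 (2 * C * δ) ⊆ thickening δ (affAct (g n) '' Y) := fun x hx =>
    inter_ball_subset_thickening_of_CF_lt hn hδ_le_one
      ⟨mem_univ x, closedBall_subset_ball hδ_inv hx⟩
  have hcount :=
    (add_one_le_encard_closedBall_inter_of_subset_thickening C hδ.le hdense).trans <|
    (encard_mono (inter_subset_inter_left _ (closedBall_subset_closedBall
      (hδ_mul.trans_le (min_le_left r 1))))).trans <|
    encard_inter_affAct_image_le (g n) h (convex_closedBall 0 r) hvol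
  exact absurd (by exact_mod_cast hcount) (Nat.not_succ_le_self C)

/-- If at most `C` points of `Y` lie in any convex set of volume `ε`, then `ℝ^d` is not in
the closure of the `SL_d(ℝ) ⋉ ℝ^d`-orbit of `Y` in the Chabauty–Fell topology. -/
theorem univ_not_in_orbit_closure {d : ℕ} (hd : 1 ≤ d)
    (Y : Set (EuclideanSpace ℝ (Fin d))) (hY : IsClosed Y) (ε : ℝ) (C : ℕ)
    (hε : 0 < ε) (hC : 0 < C)
    (h : ∀ K : Set (EuclideanSpace ℝ (Fin d)), Convex ℝ K →
      volume K = ENNReal.ofReal ε → (K ∩ Y).encard ≤ C) :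
    ¬ ∃ g : ℕ → Matrix.SpecialLinearGroup (Fin d) ℝ × EuclideanSpace ℝ (Fin d),
      Tendsto (fun n => CF (affAct (g n) '' Y) (univ : Set (EuclideanSpace ℝ (Fin d))))
        atTop (nhds 0) :=
  univ_not_in_orbit_closure_general hd Y ε C hε h
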